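/- Let p ∈ (1,∞). For each fixed y ∈ (0,1), G_a(y) → ∞ as a → 0⁺. -/

import Mathlib

/-! The terms `8p/a` and `2pw/a` of the numerator of `F_a` already dominate `(2/a)` times its
denominator `y²(4 + (p-1)w)` when `y ≤ 1`, so `-G_a' ≥ 2/a` on `(0,1)`. Integrating from `y` to `1`
gives `G_a(y) ≥ 2(1-y)/a`, which tends to `∞` as `a → 0⁺`. -/

open Set Real Filter MeasureTheory

noncomputable def Fa (p a y w : ℝ) : ℝ :=
  (8*p*(1/a + 2*y) + (2*p/a + 4*(3*p - 2)*y + 2*(p - 1)*y*w)*w) / (y^2 * (4 + (p - 1)*w))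

def IsGFamily (p : ℝ) (G : ℝ → ℝ → ℝ) : Prop :=
  ∀ a : ℝ, 0 < a →
    ContinuousOn (G a) (Set.Ioc 0 1) ∧
    G a 1 = 0 ∧
    (∀ y ∈ Set.Ioo (0:ℝ) 1, HasDerivAt (G a) (-(Fa p a y (G a y))) y) ∧
    (∀ y ∈ Set.Ioo (0:ℝ) 1, 0 < G a y) ∧
    StrictAntiOn (G a) (Set.Ioc 0 1)

lemma two_div_le_Fa {p a y w : ℝ} (hp : 1 ≤ p) (ha : 0 < a) (hy : 0 < y) (hy1 : y ≤ 1)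
    (hw : 0 ≤ w) : 2 / a ≤ Fa p a y w := by
  have hp1 : 0 ≤ p - 1 := sub_nonneg.2 hp
  have hp2 : 0 ≤ 3*p - 2 := by linarith
  have hD : 0 < 4 + (p - 1)*w := by positivity
  have hrest : 0 ≤ 8*p*(2*y) + (4*(3*p - 2)*y + 2*(p - 1)*y*w)*w := by positivity
  rw [Fa, le_div_iff₀ (by positivity)]
  calc 2 / a * (y^2 * (4 + (p - 1)*w))
      ≤ 2 / a * (4 + (p - 1)*w) := by
        gcongr
        exact mul_le_of_le_one_left hD.le (pow_le_one₀ hy.le hy1)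
    _ ≤ 8*p/a + 2*p/a*w := by
        rw [div_mul_eq_mul_div, div_mul_eq_mul_div, ← add_div]
        gcongr
        nlinarith
    _ ≤ _ := by linarith [show 8*p*(1/a + 2*y) = 8*p/a + 8*p*(2*y) by ring]

lemma IsGFamily.two_div_mul_one_sub_le {p : ℝ} {G : ℝ → ℝ → ℝ} (hG : IsGFamily p G)
    (hp : 1 ≤ p) {a : ℝ} (ha : 0 < a) {y : ℝ} (hy : y ∈ Ioc (0:ℝ) 1) :
    2 / a * (1 - y) ≤ G a y := by
  obtain ⟨hcont, hG1, hderiv, hpos, -⟩ := hG a ha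
  have hIoo : ∀ x ∈ interior (Icc y 1), x ∈ Ioo (0:ℝ) 1 := fun x hx => by
    rw [interior_Icc] at hx
    exact ⟨hy.1.trans hx.1, hx.2⟩
  have hslope : ∀ x ∈ interior (Icc y 1), deriv (G a) x ≤ -(2 / a) := fun x hx => by
    have hx := hIoo x hx
    rw [(hderiv x hx).deriv, neg_le_neg_iff]
    exact two_div_le_Fa hp ha hx.1 hx.2.le (hpos x hx).le
  have hmvt := (convex_Icc y 1).image_sub_le_mul_sub_of_deriv_le
    (hcont.mono fun t ht => ⟨hy.1.trans_le ht.1, ht.2⟩)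
    (fun x hx => (hderiv x (hIoo x hx)).differentiableAt.differentiableWithinAt) hslope
    y (left_mem_Icc.2 hy.2) 1 (right_mem_Icc.2 hy.2) hy.2
  linarith

theorem G_tendsto_atTop_as_a_to_zero (p : ℝ) (hp : 1 < p) (G : ℝ → ℝ → ℝ)
    (hG : IsGFamily p G) :
    ∀ y ∈ Set.Ioo (0:ℝ) 1,
      Filter.Tendsto (fun a => G a y) (nhdsWithin 0 (Set.Ioi 0)) Filter.atTop := by
  intro y hy
  have hbound : Tendsto (fun a : ℝ => 2 / a * (1 - y)) (nhdsWithin 0 (Ioi 0)) atTop := by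
    simp_rw [div_eq_mul_inv (2:ℝ)]
    exact (tendsto_inv_nhdsGT_zero.const_mul_atTop two_pos).atTop_mul_const (sub_pos.2 hy.2)
  refine tendsto_atTop_mono' _ ?_ hbound
  filter_upwards [self_mem_nhdsWithin] with a ha
  exact hG.two_div_mul_one_sub_le hp.le ha (Ioo_subset_Ioc_self hy)
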